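/- arXiv:1001.4283 — 2 statements merged into one kernel-verified Lean document; each statement's English description precedes it below -/
import Mathlib

section
/- The map Φ^C: Q_n → P^C_{2n} is monotone with respect to the interleaved dominance order on bipartitions and the dominance order on partitions: if (ρ;σ) ≤ (μ;ν) in Q_n, then Φ^C(ρ;σ) ≤ Φ^C(μ;ν) in dominance order. -/
open Finset

/-- Partial sum of the first `k` terms of a sequence of naturals. -/
def psum (π : ℕ → ℕ) (k : ℕ) : ℕ := ∑ i ∈ Finset.range k, π i

/-- A composition of `n`: almost all terms zero, summing to `n`. -/
def IsComposition (n : ℕ) (π : ℕ → ℕ) : Prop :=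
  ∃ N, (∀ i, N ≤ i → π i = 0) ∧ psum π N = n

/-- Dominance order: `l` dominates `π`. -/
def Dominates (l π : ℕ → ℕ) : Prop := ∀ k, psum π k ≤ psum l k

/-- A partition: weakly decreasing sequence. -/
def IsPartition (π : ℕ → ℕ) : Prop := ∀ i, π (i + 1) ≤ π i

/-- A quasi-partition: `π i ≥ π (i+2)` for all `i`. -/
def IsQuasiPartition (π : ℕ → ℕ) : Prop := ∀ i, π (i + 2) ≤ π i

/-- Interleaving of two sequences: `(ρ₁, σ₁, ρ₂, σ₂, …)` (0-indexed). -/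
def interleave (ρ σ : ℕ → ℕ) (i : ℕ) : ℕ :=
  if i % 2 = 0 then ρ (i / 2) else σ (i / 2)

/-- A bipartition of `n`: a pair of partitions whose interleaving sums to `n`. -/
def IsBipartition (n : ℕ) (ρ σ : ℕ → ℕ) : Prop :=
  IsPartition ρ ∧ IsPartition σ ∧ IsComposition n (interleave ρ σ)

/-- Interleaved dominance order on bipartitions: `(ρ;σ) ≤ (μ;ν)`. -/
def BiLE (ρ σ μ ν : ℕ → ℕ) : Prop :=
  Dominates (interleave μ ν) (interleave ρ σ)

/-- The map `Φ^C` on sequences: replace a consecutive pair `2s < 2t`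
by `s+t, s+t` (pointwise description; replacements never overlap for
quasi-partitions). -/
def phiC (π : ℕ → ℕ) : ℕ → ℕ
  | 0 => if π 0 < π 1 then (π 0 + π 1) / 2 else π 0
  | (j + 1) =>
      if π (j + 1) < π (j + 2) then (π (j + 1) + π (j + 2)) / 2
      else if π j < π (j + 1) then (π j + π (j + 1)) / 2
      else π (j + 1)

/-- `Φ^C` of a bipartition: apply `phiC` to the doubled interleaving. -/
def PhiC (ρ σ : ℕ → ℕ) : ℕ → ℕ := phiC (fun i => 2 * interleave ρ σ i)

/-- Membership in `P^C_{2n}`: partition of `2n` with every odd part of even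
multiplicity. -/
def IsPC (n : ℕ) (l : ℕ → ℕ) : Prop :=
  IsPartition l ∧ IsComposition (2 * n) l ∧
    ∀ a : ℕ, Odd a → Even ({i | l i = a}.ncard)

/-- C-distinguished: `μ i ≥ ν i - 1` and `ν i ≥ μ (i+1) - 1`. -/
def QC (μ ν : ℕ → ℕ) : Prop :=
  ∀ i, ν i ≤ μ i + 1 ∧ μ (i + 1) ≤ ν i + 1

/-- B-distinguished: `μ i ≥ ν i - 2` and `ν i ≥ μ (i+1)`. -/
def QB (μ ν : ℕ → ℕ) : Prop :=
  ∀ i, ν i ≤ μ i + 2 ∧ μ (i + 1) ≤ ν i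

/-- Special: `μ i ≥ ν i - 1` and `ν i ≥ μ (i+1)`. -/
def QS (μ ν : ℕ → ℕ) : Prop :=
  ∀ i, ν i ≤ μ i + 1 ∧ μ (i + 1) ≤ ν i

/-- The condition defining `Q_n^{B,2}`: `μ i ≥ ν i - 2`. -/
def QB2 (μ ν : ℕ → ℕ) : Prop := ∀ i, ν i ≤ μ i + 2

/-- For an antitone sequence, the starting index of the run of equal values
containing index `i`. -/
noncomputable def runStart (l : ℕ → ℕ) (i : ℕ) : ℕ := {j | l i < l j}.ncard

/-- The map `Φ̂^C`, pointwise: halve even parts; replace an (even-length)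
maximal run of an odd part `2k+1` with `k, k+1, k, k+1, …`. -/
noncomputable def hphiC (l : ℕ → ℕ) (i : ℕ) : ℕ :=
  if Even (l i) then l i / 2
  else if Even (i - runStart l i) then l i / 2 else l i / 2 + 1

/-- Partial sums of an integer sequence. -/
def zsum (π : ℕ → ℤ) (k : ℕ) : ℤ := ∑ i ∈ Finset.range k, π i

/-- Dominance order on integer sequences. -/
def ZDominates (l π : ℕ → ℤ) : Prop := ∀ k, zsum π k ≤ zsum l k

/-- The interleaved integer sequence `(2ρ₁+1, 2σ₁−1, 2ρ₂+1, 2σ₂−1, …)`. -/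
def interB (ρ σ : ℕ → ℕ) (i : ℕ) : ℤ :=
  if i % 2 = 0 then 2 * (ρ (i / 2) : ℤ) + 1 else 2 * (σ (i / 2) : ℤ) - 1

/-- The map `Φ^B` on integer sequences: replace a consecutive pair `s < t`
by `(s+t)/2, (s+t)/2` (pointwise description). -/
def phiB (π : ℕ → ℤ) : ℕ → ℤ
  | 0 => if π 0 < π 1 then (π 0 + π 1) / 2 else π 0
  | (j + 1) =>
      if π (j + 1) < π (j + 2) then (π (j + 1) + π (j + 2)) / 2
      else if π j < π (j + 1) then (π j + π (j + 1)) / 2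
      else π (j + 1)

/-- `Φ^B` of a bipartition. -/
def PhiB (ρ σ : ℕ → ℕ) : ℕ → ℤ := phiB (interB ρ σ)

/-- Membership in `P^B_{2n+1}` for an integer sequence: nonnegative, weakly
decreasing, summing to `2n+1`, with every (positive) even part of even
multiplicity. -/
def IsPB (n : ℕ) (l : ℕ → ℤ) : Prop :=
  (∀ i, 0 ≤ l i) ∧ (∀ i, l (i + 1) ≤ l i) ∧
  (∃ N, (∀ i, N ≤ i → l i = 0) ∧ zsum l N = 2 * n + 1) ∧
  ∀ a : ℤ, 0 < a → Even a → Even ({i | l i = a}.ncard)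

/-- Membership in `P^B_{2n+1}` for a natural-number partition. -/
def IsPBN (n : ℕ) (l : ℕ → ℕ) : Prop :=
  IsPartition l ∧ IsComposition (2 * n + 1) l ∧
    ∀ a : ℕ, 0 < a → Even a → Even ({i | l i = a}.ncard)

/-- The map `Φ̂^B`, pointwise (0-indexed, so the paper's index `i` is `j+1`):
an odd part `λ_i` becomes `(λ_i + (−1)^i)/2`; a maximal run of an even part
`2k` starting at (0-indexed) position `s` becomes `k, k, …` if `s` is odd
(paper's `i` even) and `k−1, k+1, k−1, k+1, …` if `s` is even (paper's `i`
odd). -/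
noncomputable def hphiB (l : ℕ → ℕ) (j : ℕ) : ℕ :=
  if Odd (l j) then (if Even j then (l j - 1) / 2 else (l j + 1) / 2)
  else
    if Odd (runStart l j) then l j / 2
    else if Even (j - runStart l j) then l j / 2 - 1 else l j / 2 + 1

/-- First component of the special closure `(ρ;σ)°`. -/
def scRho (ρ σ : ℕ → ℕ) : ℕ → ℕ
  | 0 => if ρ 0 + 1 < σ 0 then (ρ 0 + σ 0) / 2 else ρ 0
  | (i + 1) =>
      if ρ (i + 1) + 1 < σ (i + 1) then (ρ (i + 1) + σ (i + 1)) / 2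
      else if σ i < ρ (i + 1) then (σ i + ρ (i + 1)) / 2
      else ρ (i + 1)

/-- Second component of the special closure `(ρ;σ)°`. -/
def scSigma (ρ σ : ℕ → ℕ) (i : ℕ) : ℕ :=
  if ρ i + 1 < σ i then (ρ i + σ i + 1) / 2
  else if σ i < ρ (i + 1) then (σ i + ρ (i + 1) + 1) / 2
  else σ i

/-- First component of the closure `(ρ;σ)~` into `Q_n^{B,2}`. -/
def tRho (ρ σ : ℕ → ℕ) (i : ℕ) : ℕ :=
  if ρ i + 2 < σ i then (ρ i + σ i + 1) / 2 - 1 else ρ i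

/-- Second component of the closure `(ρ;σ)~` into `Q_n^{B,2}`. -/
def tSigma (ρ σ : ℕ → ℕ) (i : ℕ) : ℕ :=
  if ρ i + 2 < σ i then (ρ i + σ i) / 2 + 1 else σ i

/-- First component of the closure `(ρ;σ)^B` into `Q_n^B`. -/
def bRho (ρ σ : ℕ → ℕ) : ℕ → ℕ
  | 0 => if ρ 0 + 2 < σ 0 then (ρ 0 + σ 0 + 1) / 2 - 1 else ρ 0
  | (i + 1) =>
      if ρ (i + 1) + 2 < σ (i + 1) then (ρ (i + 1) + σ (i + 1) + 1) / 2 - 1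
      else if σ i < ρ (i + 1) then (σ i + ρ (i + 1)) / 2
      else ρ (i + 1)

/-- Second component of the closure `(ρ;σ)^B` into `Q_n^B`. -/
def bSigma (ρ σ : ℕ → ℕ) (i : ℕ) : ℕ :=
  if ρ i + 2 < σ i then (ρ i + σ i) / 2 + 1
  else if σ i < ρ (i + 1) then (σ i + ρ (i + 1) + 1) / 2
  else σ i

/-- First component of the closure `(ρ;σ)^C` into `Q_n^C`. -/
def cRho (ρ σ : ℕ → ℕ) : ℕ → ℕ
  | 0 => if ρ 0 + 1 < σ 0 then (ρ 0 + σ 0) / 2 else ρ 0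
  | (i + 1) =>
      if ρ (i + 1) + 1 < σ (i + 1) then (ρ (i + 1) + σ (i + 1)) / 2
      else if σ i + 1 < ρ (i + 1) then (σ i + ρ (i + 1) + 1) / 2
      else ρ (i + 1)

/-- Second component of the closure `(ρ;σ)^C` into `Q_n^C`. -/
def cSigma (ρ σ : ℕ → ℕ) (i : ℕ) : ℕ :=
  if ρ i + 1 < σ i then (ρ i + σ i + 1) / 2
  else if σ i + 1 < ρ (i + 1) then (σ i + ρ (i + 1)) / 2
  else σ i

/-!
For a quasi-partition `π` with even parts, the partial sums `P` of `Φ^C(π)` are obtained from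
those of `π` by the local rule `2 P'(k+1) = max (2 P(k+1)) (P k + P(k+2))`: averaging an ascent
`π k < π (k+1)` replaces `P(k+1)` by the midpoint of its neighbours, which then exceeds it, and
averaged pairs never overlap. The right-hand side is monotone in `P`, so dominance is preserved.
-/

lemma psum_succ (π : ℕ → ℕ) (k : ℕ) : psum π (k + 1) = psum π k + π k :=
  sum_range_succ π k

lemma psum_two_mul (π : ℕ → ℕ) (k : ℕ) : psum (fun i => 2 * π i) k = 2 * psum π k :=
  (mul_sum _ _ _).symm

lemma Dominates.two_mul {l π : ℕ → ℕ} (h : Dominates l π) :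
    Dominates (fun i => 2 * l i) (fun i => 2 * π i) := fun k => by
  rw [psum_two_mul, psum_two_mul]
  exact Nat.mul_le_mul_left 2 (h k)

lemma IsQuasiPartition.two_mul {π : ℕ → ℕ} (h : IsQuasiPartition π) :
    IsQuasiPartition (fun i => 2 * π i) :=
  fun i => Nat.mul_le_mul_left 2 (h i)

lemma isQuasiPartition_interleave {ρ σ : ℕ → ℕ} (hρ : IsPartition ρ) (hσ : IsPartition σ) :
    IsQuasiPartition (interleave ρ σ) := fun i => by
  have hmod : (i + 2) % 2 = i % 2 := by omega
  have hdiv : (i + 2) / 2 = i / 2 + 1 := by omega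
  unfold interleave
  rw [hmod, hdiv]
  split
  · exact hρ _
  · exact hσ _

lemma two_mul_psum_phiC {π : ℕ → ℕ} (hq : IsQuasiPartition π) (hev : ∀ i, Even (π i)) (k : ℕ) :
    2 * psum (phiC π) (k + 1) = max (2 * psum π (k + 1)) (psum π k + psum π (k + 2)) := by
  induction k with
  | zero =>
    obtain ⟨a, ha⟩ := hev 0
    obtain ⟨b, hb⟩ := hev 1
    simp only [psum, sum_range_succ, sum_range_zero, phiC]
    split_ifs <;> omega
  | succ k ih =>
    have hphi : phiC π (k + 1) =
        if π (k + 1) < π (k + 2) then (π (k + 1) + π (k + 2)) / 2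
        else if π k < π (k + 1) then (π k + π (k + 1)) / 2
        else π (k + 1) := rfl
    obtain ⟨a, ha⟩ := hev k
    obtain ⟨b, hb⟩ := hev (k + 1)
    obtain ⟨c, hc⟩ := hev (k + 2)
    have hqk := hq k
    rw [psum_succ (phiC π), mul_add, ih, hphi, psum_succ π (k + 2), psum_succ π (k + 1),
      psum_succ π k]
    split_ifs <;> omega

lemma Dominates.phiC {l π : ℕ → ℕ} (hl : IsQuasiPartition l) (hπ : IsQuasiPartition π)
    (hevl : ∀ i, Even (l i)) (hevπ : ∀ i, Even (π i)) (h : Dominates l π) :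
    Dominates (phiC l) (phiC π) := by
  rintro (_ | k)
  · exact le_rfl
  · refine Nat.le_of_mul_le_mul_left ?_ two_pos
    rw [two_mul_psum_phiC hl hevl, two_mul_psum_phiC hπ hevπ]
    exact max_le_max (Nat.mul_le_mul_left 2 (h _)) (Nat.add_le_add (h _) (h _))

/-- `Φ^C` is monotone from interleaved dominance order on
bipartitions to dominance order on partitions. -/
theorem phiC_monotone (n : ℕ) (ρ σ μ ν : ℕ → ℕ)
    (h1 : IsBipartition n ρ σ) (h2 : IsBipartition n μ ν)
    (hle : BiLE ρ σ μ ν) :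
    Dominates (PhiC μ ν) (PhiC ρ σ) :=
  Dominates.phiC (isQuasiPartition_interleave h2.1 h2.2.1).two_mul
    (isQuasiPartition_interleave h1.1 h1.2.1).two_mul (fun _ => even_two_mul _)
    (fun _ => even_two_mul _) hle.two_mul
end

section
/- For any λ ∈ P^C_{2n}, one has Φ^C(Φ̂^C(λ)) = λ; that is, Φ^C is a left inverse of Φ̂^C. -/
/-!
With `π = 2 • Φ̂^C(λ)`, every even part of `λ` is reproduced, and a run of an odd part `2k+1`,
having even length, is cut into consecutive pairs that become `(2k, 2k+2)`. Since `λ` is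
antitone these pairs are exactly the ascents of `π`, and `Φ^C` averages each of them back to
`(2k+1, 2k+1)`.
-/

open Finset

section Runs

variable {l : ℕ → ℕ}

lemma setOf_lt_apply_eq_Iio (hl : Antitone l) (i : ℕ) :
    {j | l i < l j} = Set.Iio (runStart l i) := by
  classical
  have hex : ∃ j, l j ≤ l i := ⟨i, le_rfl⟩
  have hS : {j | l i < l j} = Set.Iio (Nat.find hex) := by
    ext j
    simp only [Set.mem_ofPred_eq, Set.mem_Iio]
    refine ⟨fun hj => ?_, fun hj => not_le.mp (Nat.find_min hex hj)⟩
    by_contra hge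
    exact absurd ((hl (not_lt.mp hge)).trans (Nat.find_spec hex)) (not_le.mpr hj)
  rw [runStart, hS]
  congr 1
  rw [← Finset.coe_range, Set.ncard_coe_finset, Finset.card_range]

lemma runStart_le (hl : Antitone l) (i : ℕ) : runStart l i ≤ i := by
  by_contra hlt
  have : i ∈ {j | l i < l j} := by
    rw [setOf_lt_apply_eq_Iio hl]
    exact not_le.mp hlt
  exact lt_irrefl _ (Set.mem_ofPred.mp this)

lemma apply_eq_of_runStart_le (hl : Antitone l) {i j : ℕ} (hsj : runStart l i ≤ j)
    (hji : j ≤ i) : l j = l i := by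
  have hj : j ∉ {j | l i < l j} := by
    rw [setOf_lt_apply_eq_Iio hl]
    exact not_lt.mpr hsj
  exact le_antisymm (not_lt.mp hj) (hl hji)

lemma runStart_congr {i j : ℕ} (h : l j = l i) : runStart l j = runStart l i := by
  rw [runStart, runStart, h]

end Runs

/-- `hphiC` cuts each run of an odd part `2k+1` into consecutive pairs, sent to `k, k+1`;
this marks the first position of such a pair. -/
def IsPairStart (l : ℕ → ℕ) (i : ℕ) : Prop :=
  Odd (l i) ∧ Even (i - runStart l i)

section PairStart

variable {l : ℕ → ℕ} {i : ℕ}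

lemma hphiC_of_isPairStart (h : IsPairStart l i) : hphiC l i = l i / 2 := by
  rw [hphiC, if_neg (Nat.not_even_iff_odd.mpr h.1), if_pos h.2]

lemma hphiC_of_not_isPairStart (h : ¬IsPairStart l i) : hphiC l i = (l i + 1) / 2 := by
  unfold hphiC IsPairStart at *
  rcases Nat.even_or_odd (l i) with he | ho
  · rw [if_pos he]
    obtain ⟨k, hk⟩ := he
    omega
  · rw [if_neg (Nat.not_even_iff_odd.mpr ho), if_neg (fun he => h ⟨ho, he⟩)]
    obtain ⟨k, hk⟩ := ho
    omega

lemma hphiC_le (l : ℕ → ℕ) (i : ℕ) : hphiC l i ≤ (l i + 1) / 2 := by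
  by_cases h : IsPairStart l i
  · rw [hphiC_of_isPairStart h]
    omega
  · rw [hphiC_of_not_isPairStart h]

lemma hphiC_succ_le (hl : Antitone l) (h : ¬IsPairStart l i) :
    hphiC l (i + 1) ≤ hphiC l i := by
  rw [hphiC_of_not_isPairStart h]
  exact (hphiC_le l (i + 1)).trans
    (Nat.div_le_div_right (Nat.add_le_add_right (hl i.le_succ) 1))

/-- A pair cannot be cut off by the end of its run, since odd parts have even multiplicity. -/
lemma IsPairStart.apply_succ (hl : Antitone l)
    (hodd : ∀ a : ℕ, Odd a → Even {j | l j = a}.ncard) (h : IsPairStart l i) :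
    l (i + 1) = l i := by
  by_contra hne
  have hlt : l (i + 1) < l i := lt_of_le_of_ne (hl i.le_succ) hne
  have hrun : {j | l j = l i} = Set.Icc (runStart l i) i := by
    ext j
    simp only [Set.mem_ofPred_eq, Set.mem_Icc]
    refine ⟨fun hj => ⟨?_, ?_⟩, fun hj => apply_eq_of_runStart_le hl hj.1 hj.2⟩
    · have : j ∉ {j | l i < l j} := by simp [hj]
      rw [setOf_lt_apply_eq_Iio hl] at this
      exact not_lt.mp this
    · by_contra hij
      exact absurd ((hl (not_le.mp hij)).trans_lt hlt) (by omega)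
  have hcard := hodd (l i) h.1
  rw [hrun, ← Finset.coe_Icc, Set.ncard_coe_finset, Nat.card_Icc] at hcard
  have := runStart_le hl i
  obtain ⟨a, ha⟩ := hcard
  obtain ⟨b, hb⟩ := h.2
  omega

lemma IsPairStart.not_succ (hl : Antitone l) (h : IsPairStart l i) (hsucc : l (i + 1) = l i) :
    ¬IsPairStart l (i + 1) := by
  rintro ⟨-, ⟨a, ha⟩⟩
  obtain ⟨b, hb⟩ := h.2
  rw [runStart_congr hsucc] at ha
  have := runStart_le hl i
  omega

lemma exists_isPairStart_pred (hl : Antitone l) (hodd : Odd (l i)) (h : ¬IsPairStart l i) :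
    ∃ j, i = j + 1 ∧ IsPairStart l j := by
  have hoff : ¬Even (i - runStart l i) := fun he => h ⟨hodd, he⟩
  have hlt : runStart l i < i := by
    rcases (runStart_le hl i).lt_or_eq with hlt | heq
    · exact hlt
    · simp [heq] at hoff
  obtain ⟨j, rfl⟩ := Nat.exists_eq_add_one_of_ne_zero (Nat.ne_zero_of_lt hlt)
  have hj : l j = l (j + 1) := apply_eq_of_runStart_le hl (Nat.le_of_lt_succ hlt) j.le_succ
  refine ⟨j, rfl, hj ▸ hodd, ?_⟩
  rw [runStart_congr hj, Nat.even_iff]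
  rw [Nat.even_iff] at hoff
  omega

end PairStart

section PhiC

variable {π : ℕ → ℕ}

lemma phiC_of_lt {i : ℕ} (h : π i < π (i + 1)) : phiC π i = (π i + π (i + 1)) / 2 := by
  cases i <;> simp [phiC, h]

lemma phiC_succ_of_lt {j : ℕ} (hnext : π (j + 2) ≤ π (j + 1)) (h : π j < π (j + 1)) :
    phiC π (j + 1) = (π j + π (j + 1)) / 2 := by
  simp [phiC, h, not_lt.mpr hnext]

lemma phiC_of_le {i : ℕ} (hnext : π (i + 1) ≤ π i) (hprev : ∀ j, i = j + 1 → π i ≤ π j) :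
    phiC π i = π i := by
  cases i with
  | zero => simp [phiC, not_lt.mpr hnext]
  | succ j => simp [phiC, not_lt.mpr hnext, not_lt.mpr (hprev j rfl)]

end PhiC

lemma interleave_even_odd (a : ℕ → ℕ) :
    interleave (fun j => a (2 * j)) (fun j => a (2 * j + 1)) = a := by
  funext i
  unfold interleave
  split_ifs <;> dsimp only <;> congr 1 <;> omega

lemma phiC_two_mul_hphiC {l : ℕ → ℕ} (hl : Antitone l)
    (hodd : ∀ a : ℕ, Odd a → Even {j | l j = a}.ncard) (i : ℕ) :
    phiC (fun j => 2 * hphiC l j) i = l i := by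
  have hmono : ∀ {k}, ¬IsPairStart l k → 2 * hphiC l (k + 1) ≤ 2 * hphiC l k :=
    fun hk => Nat.mul_le_mul_left 2 (hphiC_succ_le hl hk)
  by_cases hi : IsPairStart l i
  · have hsucc := hi.apply_succ hl hodd
    rw [phiC_of_lt] <;>
      simp only [hphiC_of_isPairStart hi, hphiC_of_not_isPairStart (hi.not_succ hl hsucc), hsucc]
    all_goals obtain ⟨k, hk⟩ := hi.1; omega
  by_cases hprev : ∃ j, i = j + 1 ∧ IsPairStart l j
  · obtain ⟨j, rfl, hj⟩ := hprev
    have hsucc := hj.apply_succ hl hodd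
    rw [phiC_succ_of_lt (hmono hi)] <;>
      simp only [hphiC_of_isPairStart hj, hphiC_of_not_isPairStart hi, hsucc]
    all_goals obtain ⟨k, hk⟩ := hj.1; omega
  · have heven : Even (l i) := by
      by_contra ho
      exact hprev (exists_isPairStart_pred hl (Nat.not_even_iff_odd.mp ho) hi)
    rw [phiC_of_le (hmono hi)]
    · obtain ⟨k, hk⟩ := heven
      rw [hphiC_of_not_isPairStart hi]
      omega
    · rintro j rfl
      exact hmono fun hj => hprev ⟨j, rfl, hj⟩

/-- `Φ^C(Φ̂^C(λ)) = λ` for all `λ ∈ P^C_{2n}`. -/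
theorem phiC_hphiC (n : ℕ) (l : ℕ → ℕ) (h : IsPC n l) :
    ∀ i, PhiC (fun j => hphiC l (2 * j)) (fun j => hphiC l (2 * j + 1)) i
      = l i := by
  obtain ⟨hl, -, hodd⟩ := h
  intro i
  rw [PhiC, interleave_even_odd]
  exact phiC_two_mul_hphiC (antitone_nat_of_succ_le hl) hodd i
end
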